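/- arXiv:2402.17712 — 2 statements merged into one kernel-verified Lean document; each statement's English description precedes it below -/
import Mathlib

section
/- Let p ∈ ℕ, z ∈ ℂ, and λ ∈ ℂ with λ ≠ 0 and Re λ ≥ 0. Suppose u is a nonzero complex polynomial of degree ≤ p satisfying ∫₀¹ u'(t)·v(t) dt + u(0)·v(0) − z·u(1)·v(0) = λ·∫₀¹ u(t)·v(t) dt for every complex polynomial v of degree ≤ p. Then 2·Re(λ⁻¹)·∫₀¹ t·|u'(t)|² dt = |u(1)|² − ∫₀¹ |u(t)|² dt; in particular |u(1)|² ≥ ∫₀¹ |u(t)|² dt, i.e. the eigenfunction's endpoint value dominates its L²(0,1)-norm. -/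
/-!
Test the eigenvalue identity against `v = X · conj u'`, which has degree `≤ p` and vanishes
at `0`, so both boundary terms drop out and `∫₀¹ t |u'|² = λ ∫₀¹ t u conj u'`. On the other
hand `(t |u|²)' = |u|² + 2 t Re(u conj u')`, so integrating over `[0, 1]` gives
`|u(1)|² = ∫₀¹ |u|² + 2 Re ∫₀¹ t u conj u' = ∫₀¹ |u|² + 2 Re(λ⁻¹) ∫₀¹ t |u'|²`.
The inequality follows since `Re(λ⁻¹) = Re λ / |λ|² ≥ 0`.
-/

open MeasureTheory Polynomial ComplexConjugate

theorem Polynomial.eval_map_conj_ofReal (q : ℂ[X]) (t : ℝ) :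
    (q.map (starRingEnd ℂ)).eval (t : ℂ) = conj (q.eval (t : ℂ)) := by
  rw [eval_map, ← eval₂_at_apply, Complex.conj_ofReal]

theorem Polynomial.natDegree_X_mul_map_derivative_le {R S : Type*} [Semiring R] [Semiring S]
    (f : R →+* S) (u : R[X]) : (X * (derivative u).map f).natDegree ≤ u.natDegree := by
  rcases Nat.eq_zero_or_pos u.natDegree with h | h
  · simp [derivative_of_natDegree_zero h]
  · calc (X * (derivative u).map f).natDegree
        ≤ 1 + (derivative u).natDegree :=
          natDegree_mul_le.trans (add_le_add natDegree_X_le natDegree_map_le)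
      _ ≤ u.natDegree := by have := natDegree_derivative_le u; omega

theorem sq_norm_one_eq_integral_add {E : Type*} [NormedAddCommGroup E] [InnerProductSpace ℝ E]
    {f f' : ℝ → E} (hf : ∀ t, HasDerivAt f (f' t) t) (hf' : Continuous f') :
    ‖f 1‖ ^ 2 =
      (∫ t in (0:ℝ)..1, ‖f t‖ ^ 2) + 2 * ∫ t in (0:ℝ)..1, t * inner ℝ (f' t) (f t) := by
  have hcont : Continuous f := continuous_iff_continuousAt.2 fun t => (hf t).continuousAt
  have hderiv : ∀ t, HasDerivAt (fun s => s * ‖f s‖ ^ 2)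
      (‖f t‖ ^ 2 + 2 * (t * inner ℝ (f' t) (f t))) t := fun t =>
    ((hasDerivAt_id t).mul (hf t).norm_sq).congr_deriv (by rw [real_inner_comm, id]; ring)
  have hint₁ : IntervalIntegrable (fun t => ‖f t‖ ^ 2) volume 0 1 :=
    (hcont.norm.pow 2).intervalIntegrable _ _
  have hint₂ : IntervalIntegrable (fun t => 2 * (t * inner ℝ (f' t) (f t))) volume 0 1 :=
    (continuous_const.mul (continuous_id.mul (hf'.inner hcont))).intervalIntegrable _ _
  rw [← intervalIntegral.integral_const_mul, ← intervalIntegral.integral_add hint₁ hint₂,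
    intervalIntegral.integral_eq_sub_of_hasDerivAt (fun t _ => hderiv t) (hint₁.add hint₂)]
  simp

theorem Complex.re_integral_mul_ofReal_mul_conj {f g : ℝ → ℂ} (hf : Continuous f)
    (hg : Continuous g) (a b : ℝ) :
    (∫ t in a..b, f t * (t * conj (g t))).re = ∫ t in a..b, t * inner ℝ (g t) (f t) := by
  have hcont : Continuous fun t : ℝ => f t * (t * conj (g t)) :=
    hf.mul (continuous_ofReal.mul (continuous_conj.comp hg))
  rw [← RCLike.re_to_complex,
    ← intervalIntegral.intervalIntegral_re (hcont.intervalIntegrable _ _)]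
  congr 1 with t
  rw [RCLike.re_to_complex, mul_left_comm, Complex.re_ofReal_mul, Complex.inner]

theorem Complex.mul_ofReal_mul_conj_self (z : ℂ) (t : ℝ) :
    z * (t * conj z) = ((t * ‖z‖ ^ 2 : ℝ) : ℂ) := by
  rw [mul_left_comm, Complex.mul_conj']
  push_cast
  rfl

theorem stmt_6_general (p : ℕ) (z : ℂ) (lam : ℂ) (hlam0 : lam ≠ 0) (hlamre : 0 ≤ lam.re)
    (u : Polynomial ℂ) (hdeg : u.degree ≤ (p : ℕ))
    (heig : ∀ v : Polynomial ℂ, v.degree ≤ (p : ℕ) →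
      (∫ t in (0:ℝ)..1, (Polynomial.derivative u).eval (t : ℂ) * v.eval (t : ℂ))
          + u.eval 0 * v.eval 0 - z * (u.eval 1 * v.eval 0)
        = lam * ∫ t in (0:ℝ)..1, u.eval (t : ℂ) * v.eval (t : ℂ)) :
    2 * (lam⁻¹).re *
        (∫ t in (0:ℝ)..1, t * ‖(Polynomial.derivative u).eval (t : ℂ)‖ ^ 2)
      = ‖u.eval 1‖ ^ 2 - (∫ t in (0:ℝ)..1, ‖u.eval (t : ℂ)‖ ^ 2) ∧
    (∫ t in (0:ℝ)..1, ‖u.eval (t : ℂ)‖ ^ 2) ≤ ‖u.eval 1‖ ^ 2 := by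
  set w := derivative u
  set I := ∫ t in (0:ℝ)..1, t * ‖w.eval (t : ℂ)‖ ^ 2
  have hcont (q : ℂ[X]) : Continuous fun t : ℝ => q.eval (t : ℂ) :=
    q.continuous.comp Complex.continuous_ofReal
  have htest : (I : ℂ) = lam * ∫ t in (0:ℝ)..1, u.eval (t : ℂ) * (t * conj (w.eval (t : ℂ))) := by
    have hv := heig (X * w.map (starRingEnd ℂ)) (natDegree_le_iff_degree_le.1
      ((natDegree_X_mul_map_derivative_le _ u).trans (natDegree_le_iff_degree_le.2 hdeg)))
    simp only [eval_mul, eval_X, eval_map_conj_ofReal, zero_mul, mul_zero, sub_zero,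
      add_zero] at hv
    simp only [← hv, Complex.mul_ofReal_mul_conj_self, intervalIntegral.integral_ofReal, I]
  have hre : ∫ t in (0:ℝ)..1, t * inner ℝ (w.eval (t : ℂ)) (u.eval (t : ℂ)) = (lam⁻¹).re * I := by
    rw [← Complex.re_integral_mul_ofReal_mul_conj (hcont u) (hcont w),
      (eq_inv_mul_iff_mul_eq₀ hlam0).2 htest.symm]
    simp
  have henergy := sq_norm_one_eq_integral_add (f' := fun t => w.eval (t : ℂ))
    (fun t => (u.hasDerivAt (t : ℂ)).comp_ofReal) (hcont w)
  rw [Complex.ofReal_one] at henergy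
  have hI : 0 ≤ I := intervalIntegral.integral_nonneg zero_le_one fun t ht => by
    have := ht.1
    positivity
  have hlam : 0 ≤ (lam⁻¹).re := by
    rw [Complex.inv_re]
    exact div_nonneg hlamre (Complex.normSq_nonneg _)
  exact ⟨by linarith, by nlinarith⟩

/-- if `λ ≠ 0` with `Re λ ≥ 0` is an eigenvalue of the `p`-CQ symbol `δ(z)`
with nonzero polynomial eigenfunction `u` of degree `≤ p`, then
`2 Re(λ⁻¹) ∫₀¹ t |u'(t)|² dt = |u(1)|² − ∫₀¹ |u(t)|² dt`, and in particular
`|u(1)|² ≥ ∫₀¹ |u(t)|² dt`. -/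
theorem stmt_6 (p : ℕ) (z : ℂ) (lam : ℂ) (hlam0 : lam ≠ 0) (hlamre : 0 ≤ lam.re)
    (u : Polynomial ℂ) (hu : u ≠ 0) (hdeg : u.degree ≤ (p : ℕ))
    (heig : ∀ v : Polynomial ℂ, v.degree ≤ (p : ℕ) →
      (∫ t in (0:ℝ)..1, (Polynomial.derivative u).eval (t : ℂ) * v.eval (t : ℂ))
          + u.eval 0 * v.eval 0 - z * (u.eval 1 * v.eval 0)
        = lam * ∫ t in (0:ℝ)..1, u.eval (t : ℂ) * v.eval (t : ℂ)) :
    2 * (lam⁻¹).re *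
        (∫ t in (0:ℝ)..1, t * ‖(Polynomial.derivative u).eval (t : ℂ)‖ ^ 2)
      = ‖u.eval 1‖ ^ 2 - (∫ t in (0:ℝ)..1, ‖u.eval (t : ℂ)‖ ^ 2) ∧
    (∫ t in (0:ℝ)..1, ‖u.eval (t : ℂ)‖ ^ 2) ≤ ‖u.eval 1‖ ^ 2 :=
  stmt_6_general p z lam hlam0 hlamre u hdeg heig
end

section
/- Let P_n denote the n-th Legendre polynomial. Then for all i, j ∈ ℕ: ∫_{−1}^{1} P_i'(x)·P_j(x) dx = 2 if i > j and i − j is odd, and ∫_{−1}^{1} P_i'(x)·P_j(x) dx = 0 otherwise (i.e. if i ≤ j, or if i > j with i − j even). -/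
open MeasureTheory

/-- The `n`-th Legendre polynomial, via Rodrigues' formula
`P_n(x) = (1/(2^n n!)) dⁿ/dxⁿ (x² − 1)ⁿ`, normalized so that `P_n(1) = 1`. -/
noncomputable def legendre (n : ℕ) : Polynomial ℝ :=
  Polynomial.C (1 / (2 ^ n * (n.factorial : ℝ))) *
    (Polynomial.derivative)^[n] ((Polynomial.X ^ 2 - 1) ^ n)

/-!
Integrating by parts, `∫ P_i' P_j = [P_i P_j]_{-1}^{1} - ∫ P_i P_j'`. If `i ≤ j` the left side
already vanishes, since `P_i'` has degree `< j` and `P_j` is orthogonal to all such polynomials;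
if `j < i` the right-hand integral vanishes for the same reason, and the boundary term is
`1 - (-1)^(i+j)`. Orthogonality comes from Rodrigues' formula: integrating by parts `n` times
moves all derivatives of `(x² - 1)ⁿ` onto the other factor, the boundary terms vanishing because
`±1` are roots of multiplicity `n`.
-/

open Polynomial Nat

namespace Polynomial

variable {R : Type*} [CommRing R]

theorem X_sq_sub_one_eq_mul : (X ^ 2 - 1 : R[X]) = (X - C 1) * (X - C (-1)) := by
  simp only [map_one, map_neg]
  ring

theorem isRoot_iterate_derivative_of_pow_dvd {p : R[X]} {a : R} {n k : ℕ}
    (h : (X - C a) ^ n ∣ p) (hk : k < n) : (derivative^[k] p).IsRoot a :=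
  dvd_iff_isRoot.mp <| (dvd_pow_self _ (Nat.sub_ne_zero_of_lt hk)).trans
    (pow_sub_dvd_iterate_derivative_of_pow_dvd k h)

theorem eval_iterate_derivative_X_sub_C_pow_mul (n : ℕ) (a : R) (g : R[X]) :
    (derivative^[n] ((X - C a) ^ n * g)).eval a = n ! * g.eval a := by
  rw [iterate_derivative_mul, eval_finsetSum,
    Finset.sum_eq_single_of_mem 0 (Finset.mem_range.mpr n.succ_pos)]
  · rw [n.choose_zero_right, one_smul, eval_mul, n.sub_zero, iterate_derivative_X_sub_pow_self,
      eval_natCast, Function.iterate_zero_apply]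
  · intro k hk hk0
    rw [iterate_derivative_X_sub_pow, eval_smul, eval_mul, eval_smul, eval_pow,
      Nat.sub_sub_self (Finset.mem_range_succ_iff.mp hk), eval_sub, eval_X, eval_C, sub_self,
      zero_pow hk0, smul_zero, zero_mul, smul_zero]

end Polynomial

theorem integral_eval_mul_eval_derivative (p q : ℝ[X]) (a b : ℝ) :
    ∫ x in a..b, p.eval x * (derivative q).eval x
      = p.eval b * q.eval b - p.eval a * q.eval a
        - ∫ x in a..b, (derivative p).eval x * q.eval x :=
  intervalIntegral.integral_mul_deriv_eq_deriv_mul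
    (fun x _ => p.hasDerivAt x) (fun x _ => q.hasDerivAt x)
    ((derivative p).continuous.intervalIntegrable a b)
    ((derivative q).continuous.intervalIntegrable a b)

theorem integral_eval_mul_eval_iterate_derivative_eq_zero {f q : ℝ[X]} {a b : ℝ} {n : ℕ}
    (hf : ∀ k < n, (derivative^[k] f).IsRoot a ∧ (derivative^[k] f).IsRoot b)
    (hq : derivative^[n] q = 0) :
    ∫ x in a..b, q.eval x * (derivative^[n] f).eval x = 0 := by
  induction n generalizing q with
  | zero => simp [show q = 0 from hq]
  | succ n ih =>
    obtain ⟨hfa, hfb⟩ := hf n n.lt_succ_self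
    rw [Function.iterate_succ_apply', integral_eval_mul_eval_derivative, hfa.eq_zero,
      hfb.eq_zero, ih (fun k hk => hf k (hk.trans n.lt_succ_self)) hq]
    simp

theorem natDegree_legendre_le (n : ℕ) : (legendre n).natDegree ≤ n := by
  have hsq : (X ^ 2 - 1 : ℝ[X]).natDegree ≤ 2 :=
    (natDegree_sub_le _ _).trans (by simp)
  calc (legendre n).natDegree
      ≤ ((X ^ 2 - 1 : ℝ[X]) ^ n).natDegree - n :=
        (natDegree_C_mul_le _ _).trans (natDegree_iterate_derivative _ _)
    _ ≤ 2 * n - n :=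
        Nat.sub_le_sub_right ((natDegree_pow_le_of_le n hsq).trans_eq (mul_comm _ _)) n
    _ = n := by omega

theorem iterate_derivative_derivative_legendre_eq_zero {m n : ℕ} (h : m ≤ n) :
    derivative^[n] (derivative (legendre m)) = 0 := by
  rw [← Function.iterate_succ_apply]
  exact iterate_derivative_eq_zero ((natDegree_legendre_le m).trans_lt (Nat.lt_succ_of_le h))

theorem integral_mul_legendre_eq_zero {n : ℕ} {q : ℝ[X]} (hq : derivative^[n] q = 0) :
    ∫ x in (-1 : ℝ)..1, q.eval x * (legendre n).eval x = 0 := by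
  have hroots : ∀ k < n, (derivative^[k] ((X ^ 2 - 1 : ℝ[X]) ^ n)).IsRoot (-1) ∧
      (derivative^[k] ((X ^ 2 - 1 : ℝ[X]) ^ n)).IsRoot 1 := by
    rw [X_sq_sub_one_eq_mul, mul_pow]
    exact fun k hk => ⟨isRoot_iterate_derivative_of_pow_dvd (dvd_mul_left _ _) hk,
      isRoot_iterate_derivative_of_pow_dvd (dvd_mul_right _ _) hk⟩
  simp only [legendre, eval_mul, eval_C, mul_left_comm _ (1 / _ : ℝ)]
  rw [intervalIntegral.integral_const_mul,
    integral_eval_mul_eval_iterate_derivative_eq_zero hroots hq, mul_zero]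

theorem legendre_eval_one (n : ℕ) : (legendre n).eval 1 = 1 := by
  rw [legendre, eval_mul, eval_C, X_sq_sub_one_eq_mul, mul_pow,
    eval_iterate_derivative_X_sub_C_pow_mul]
  simp only [eval_pow, eval_sub, eval_X, eval_C]
  field_simp
  norm_num

theorem legendre_eval_neg_one (n : ℕ) : (legendre n).eval (-1) = (-1) ^ n := by
  rw [legendre, eval_mul, eval_C, X_sq_sub_one_eq_mul, mul_pow, mul_comm ((X - C 1) ^ n),
    eval_iterate_derivative_X_sub_C_pow_mul]
  simp only [eval_pow, eval_sub, eval_X, eval_C]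
  rw [show (-1 - 1 : ℝ) = -1 * 2 by norm_num, mul_pow]
  field_simp

/-- `∫_{−1}^{1} P_i'(x) P_j(x) dx = 2` if `i > j` and `i − j` is odd,
and `= 0` otherwise. -/
theorem stmt_11 (i j : ℕ) :
    (∫ x in (-1:ℝ)..1, (Polynomial.derivative (legendre i)).eval x * (legendre j).eval x)
      = if j < i ∧ Odd (i - j) then 2 else 0 := by
  rcases le_or_gt i j with hij | hji
  · rw [if_neg (by omega)]
    exact integral_mul_legendre_eq_zero (iterate_derivative_derivative_legendre_eq_zero hij)
  have hodd : Odd (i - j) ↔ Odd (j + i) := (Nat.odd_sub hji.le).trans Nat.odd_add'.symm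
  simp only [mul_comm (eval _ (derivative (legendre i)))]
  rw [integral_eval_mul_eval_derivative, integral_mul_legendre_eq_zero
    (iterate_derivative_derivative_legendre_eq_zero hji.le), legendre_eval_one,
    legendre_eval_one, legendre_eval_neg_one, legendre_eval_neg_one, ← pow_add]
  simp only [hji, true_and, hodd]
  rcases Nat.even_or_odd (j + i) with h | h
  · rw [h.neg_one_pow, if_neg (Nat.not_odd_iff_even.mpr h)]
    norm_num
  · rw [h.neg_one_pow, if_pos h]
    norm_num
end
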